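/- Let a = (a_j) be any decreasing summable sequence with Σ_j a_j = 1 and let Φ be a dimension function. Then for every E ∈ 𝒞_a, the upper Φ-dimension of E is at most the upper Φ-dimension of the decreasing rearrangement D_a, and the lower Φ-dimension of E is at least the lower Φ-dimension of D_a, which equals 0. -/
import Mathlib


open Set Metric Filter Topology
open scoped ENNReal

noncomputable section

/-- The least number of closed balls of radius `r` needed to cover `E`
(`∞` if there is no finite cover). -/
def coverNumber {X : Type*} [PseudoMetricSpace X] (r : ℝ) (E : Set X) : ℝ≥0∞ :=
  ⨅ (s : Finset X) (_ : E ⊆ ⋃ x ∈ s, closedBall x r), (s.card : ℝ≥0∞)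

/-- `Φ : (0,1) → [0,∞)` is a dimension function if `x ^ (1 + Φ x)` decreases to `0`
as `x` decreases to `0`. -/
def IsDimensionFunction (Φ : ℝ → ℝ) : Prop :=
  (∀ x ∈ Ioo (0:ℝ) 1, 0 ≤ Φ x) ∧
  (∀ x ∈ Ioo (0:ℝ) 1, ∀ y ∈ Ioo (0:ℝ) 1, x ≤ y → x ^ (1 + Φ x) ≤ y ^ (1 + Φ y)) ∧
  Tendsto (fun x : ℝ => x ^ (1 + Φ x)) (nhdsWithin 0 (Ioo 0 1)) (nhds 0)

/-- A metric space is doubling if there is `M ≥ 1` such that every closed ball of radius `R`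
can be covered by at most `M` closed balls of radius `R / 2`. -/
def IsDoublingSpace (X : Type*) [PseudoMetricSpace X] : Prop :=
  ∃ M : ℕ, 1 ≤ M ∧ ∀ (x : X) (R : ℝ), ∃ s : Finset X, s.card ≤ M ∧
    closedBall x R ⊆ ⋃ y ∈ s, closedBall y (R / 2)

/-- The upper `Φ`-dimension. -/
def upperPhiDim {X : Type*} [PseudoMetricSpace X] (Φ : ℝ → ℝ) (E : Set X) : ℝ :=
  sInf {α : ℝ | ∃ c₁ > (0:ℝ), ∃ c₂ > (0:ℝ), ∀ r R : ℝ,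
    0 < r → r ≤ R ^ (1 + Φ R) → R ^ (1 + Φ R) ≤ R → R < c₁ → ∀ z ∈ E,
      coverNumber r (closedBall z R ∩ E) ≤ ENNReal.ofReal (c₂ * (R / r) ^ α)}

/-- The lower `Φ`-dimension. -/
def lowerPhiDim {X : Type*} [PseudoMetricSpace X] (Φ : ℝ → ℝ) (E : Set X) : ℝ :=
  sSup {α : ℝ | ∃ c₁ > (0:ℝ), ∃ c₂ > (0:ℝ), ∀ r R : ℝ,
    0 < r → r ≤ R ^ (1 + Φ R) → R ^ (1 + Φ R) ≤ R → R < c₁ → ∀ z ∈ E,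
      ENNReal.ofReal (c₂ * (R / r) ^ α) ≤ coverNumber r (closedBall z R ∩ E)}

/-- The (upper) Assouad dimension: the upper `Φ`-dimension with `Φ ≡ 0`. -/
def assouadDim {X : Type*} [PseudoMetricSpace X] (E : Set X) : ℝ :=
  upperPhiDim (fun _ => 0) E

/-- The lower Assouad dimension: the lower `Φ`-dimension with `Φ ≡ 0`. -/
def lowerAssouadDim {X : Type*} [PseudoMetricSpace X] (E : Set X) : ℝ :=
  lowerPhiDim (fun _ => 0) E

/-- The upper `θ`-Assouad spectrum: the upper `Φ`-dimension with constant `Φ = 1/θ - 1`. -/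
def upperAssouadSpectrum {X : Type*} [PseudoMetricSpace X] (θ : ℝ) (E : Set X) : ℝ :=
  upperPhiDim (fun _ => 1 / θ - 1) E

/-- The lower `θ`-Assouad spectrum: the lower `Φ`-dimension with constant `Φ = 1/θ - 1`. -/
def lowerAssouadSpectrum {X : Type*} [PseudoMetricSpace X] (θ : ℝ) (E : Set X) : ℝ :=
  lowerPhiDim (fun _ => 1 / θ - 1) E

/-- The upper quasi-Assouad dimension, `lim_{θ → 1}` of the upper `θ`-Assouad spectrum;
since the upper spectrum is nondecreasing in `θ`, this limit is the supremum over
`θ ∈ (0,1)`. -/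
def quasiAssouadDim {X : Type*} [PseudoMetricSpace X] (E : Set X) : ℝ :=
  ⨆ θ : Ioo (0:ℝ) 1, upperAssouadSpectrum (θ : ℝ) E

/-- The lower quasi-Assouad dimension, `lim_{θ → 1}` of the lower `θ`-Assouad spectrum;
since the lower spectrum is nonincreasing in `θ`, this limit is the infimum over
`θ ∈ (0,1)`. -/
def quasiLowerAssouadDim {X : Type*} [PseudoMetricSpace X] (E : Set X) : ℝ :=
  ⨅ θ : Ioo (0:ℝ) 1, lowerAssouadSpectrum (θ : ℝ) E

/-- Upper box dimension `limsup_{r → 0} log N_r(E) / |log r|`. -/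
def upperBoxDim {X : Type*} [PseudoMetricSpace X] (E : Set X) : ℝ :=
  limsup (fun r : ℝ => Real.log (coverNumber r E).toReal / |Real.log r|)
    (nhdsWithin 0 (Ioo 0 1))

/-- Lower box dimension `liminf_{r → 0} log N_r(E) / |log r|`. -/
def lowerBoxDim {X : Type*} [PseudoMetricSpace X] (E : Set X) : ℝ :=
  liminf (fun r : ℝ => Real.log (coverNumber r E).toReal / |Real.log r|)
    (nhdsWithin 0 (Ioo 0 1))




/-- The total length of the gaps eventually removed from the `j`-th (`0`-indexed, left to
right) step-`k` interval in the construction of the Cantor set associated with the gap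
sequence `a` (where `a i` is the length of the `i`-th gap, `i ≥ 1`); this is the length of
that interval. -/
def cantorLen (a : ℕ → ℝ) (k j : ℕ) : ℝ :=
  ∑' m : ℕ, ∑ i ∈ Finset.range (2 ^ m), a (2 ^ (k + m) + j * 2 ^ m + i)

/-- `C` is the Cantor set associated with the gap sequence `a` (gaps `a 1, a 2, …`,
the gap removed at step `k+1` from the `j`-th (`0`-indexed) step-`k` interval having length
`a (2^k + j)`): there are left endpoints `L k j` of the step-`k` intervals, each interval
has length `cantorLen a k j`, the construction starts at `[0,1]` with `L 0 0 = 0`, and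
removing the appropriate gap from a step-`k` interval yields its two step-`(k+1)`
subintervals. -/
def IsCantorSetOf (a : ℕ → ℝ) (C : Set ℝ) : Prop :=
  ∃ L : ℕ → ℕ → ℝ, L 0 0 = 0 ∧
    (∀ k j, j < 2 ^ k → L (k + 1) (2 * j) = L k j) ∧
    (∀ k j, j < 2 ^ k →
      L (k + 1) (2 * j + 1) = L k j + cantorLen a (k + 1) (2 * j) + a (2 ^ k + j)) ∧
    C = ⋂ k : ℕ, ⋃ j ∈ Finset.range (2 ^ k), Icc (L k j) (L k j + cantorLen a k j)

/-- `s n = 2⁻ⁿ Σ_{j ≥ 2ⁿ} a j`, the average length of the step-`n` intervals. -/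
def sSeq (a : ℕ → ℝ) (n : ℕ) : ℝ :=
  ((2 : ℝ) ^ n)⁻¹ * ∑' i : ℕ, a (2 ^ n + i)

/-- The depth function `φ` associated with the dimension function `Φ` and the Cantor set
with gap sequence `a`: `φ n` is the minimal integer `j` with
`s (n + j) ≤ (s n) ^ (1 + Φ (s n))`. -/
def IsDepthFunction (a : ℕ → ℝ) (Φ : ℝ → ℝ) (φ : ℕ → ℕ) : Prop :=
  ∀ n : ℕ, IsLeast {j : ℕ | sSeq a (n + j) ≤ sSeq a n ^ (1 + Φ (sSeq a n))} (φ n)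

/-- The gap sequence of the central Cantor set with step lengths `s`: every gap of level
`n+1` (indices `2^n ≤ i < 2^(n+1)`) has length `s n - 2 * s (n+1)`. -/
def centralGaps (s : ℕ → ℝ) : ℕ → ℝ :=
  fun i => s (Nat.log 2 i) - 2 * s (Nat.log 2 i + 1)

/-- `E` is a central Cantor set with step lengths `s`: `s 0 = 1`, the ratios of dissection
`s (n+1) / s n` lie in `(0, 1/2)`, and `E` is the Cantor set whose step-`(n+1)` gaps all
have length `s n - 2 * s (n+1)`. -/
def IsCentralCantorSet (s : ℕ → ℝ) (E : Set ℝ) : Prop :=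
  s 0 = 1 ∧ (∀ n, 0 < s (n + 1) ∧ 2 * s (n + 1) < s n) ∧ IsCantorSetOf (centralGaps s) E

/-- `E` belongs to `𝒞_a`: `E = [0,1] \ ⋃ⱼ Uⱼ` for a disjoint family of open subintervals
`Uⱼ ⊆ [0,1]` with `length Uⱼ = a j` (`j ≥ 1`). -/
def IsComplementarySet (a : ℕ → ℝ) (E : Set ℝ) : Prop :=
  ∃ c : ℕ → ℝ, (∀ j, 0 ≤ c j ∧ c j + a (j + 1) ≤ 1) ∧
    (Pairwise fun i j =>
      Disjoint (Ioo (c i) (c i + a (i + 1))) (Ioo (c j) (c j + a (j + 1)))) ∧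
    E = Icc 0 1 \ ⋃ j : ℕ, Ioo (c j) (c j + a (j + 1))

/-- The decreasing rearrangement `D_a = {Σ_{i ≥ k} a i : k = 1, 2, …}`. -/
def decreasingSet (a : ℕ → ℝ) : Set ℝ :=
  Set.range fun k : ℕ => ∑' i : ℕ, a (k + 1 + i)


open MeasureTheory
open scoped Classical

lemma coverNumber_le_card {X : Type*} [PseudoMetricSpace X] {r : ℝ} {E : Set X}
    (s : Finset X) (h : E ⊆ ⋃ x ∈ s, closedBall x r) :
    coverNumber r E ≤ s.card :=
  iInf_le_of_le s (iInf_le _ h)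

lemma one_le_coverNumber {X : Type*} [PseudoMetricSpace X] {r : ℝ} {E : Set X}
    (h : E.Nonempty) : 1 ≤ coverNumber r E := by
  refine le_iInf fun s => le_iInf fun hs => ?_
  obtain ⟨x, hx⟩ := h
  have := hs hx
  simp only [mem_iUnion] at this
  obtain ⟨y, hy, -⟩ := this
  have : 0 < s.card := Finset.card_pos.2 ⟨y, hy⟩
  exact_mod_cast this

lemma le_coverNumber_of_separated {r : ℝ} {E : Set ℝ} (P : Finset ℝ)
    (hPE : ∀ p ∈ P, p ∈ E)
    (hsep : ∀ p ∈ P, ∀ q ∈ P, p ≠ q → 2 * r < |p - q|) :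
    (P.card : ℝ≥0∞) ≤ coverNumber r E := by
  refine le_iInf fun s => le_iInf fun hs => ?_
  have hcard : P.card ≤ s.card := by
    classical
    have hex : ∀ p ∈ P, ∃ x ∈ s, p ∈ closedBall x r := by
      intro p hp
      have := hs (hPE p hp)
      simpa using this
    set f : ℝ → ℝ := fun p => if h : ∃ x ∈ s, p ∈ closedBall x r then h.choose else 0 with hf
    refine Finset.card_le_card_of_injOn f ?_ ?_
    · intro p hp
      have h := hex p hp
      simp only [hf, dif_pos h]
      exact h.choose_spec.1
    · intro p hp q hq hfpq
      by_contra hne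
      have hp' := hex p (by simpa using hp)
      have hq' := hex q (by simpa using hq)
      have h1 : p ∈ closedBall (f p) r := by simp only [hf, dif_pos hp']; exact hp'.choose_spec.2
      have h2 : q ∈ closedBall (f q) r := by simp only [hf, dif_pos hq']; exact hq'.choose_spec.2
      rw [hfpq] at h1
      have : dist p q ≤ 2 * r := by
        have := dist_triangle p (f q) q
        rw [dist_comm (f q) q] at this
        simp only [mem_closedBall] at h1 h2
        linarith
      have h3 := hsep p (by simpa using hp) q (by simpa using hq) hne
      rw [Real.dist_eq] at this
      linarith
  exact_mod_cast hcard



lemma coverNumber_le_Icc {r u v : ℝ} (hr : 0 < r) (huv : u ≤ v) {E : Set ℝ}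
    (hE : E ⊆ Icc u v) :
    coverNumber r E ≤ (⌊(v - u) / (2 * r)⌋₊ + 1 : ℕ) := by
  classical
  set M : ℕ := ⌊(v - u) / (2 * r)⌋₊ + 1 with hM
  set s : Finset ℝ := (Finset.range M).image (fun i : ℕ => u + r + 2 * r * i) with hs
  have hcover : E ⊆ ⋃ x ∈ s, closedBall x r := by
    intro x hx
    obtain ⟨hx1, hx2⟩ := hE hx
    set i : ℕ := ⌊(x - u) / (2 * r)⌋₊ with hi
    have h2r : 0 < 2 * r := by linarith
    have hnn : 0 ≤ (x - u) / (2 * r) := div_nonneg (by linarith) (le_of_lt h2r)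
    have hlo : (i : ℝ) ≤ (x - u) / (2 * r) := Nat.floor_le hnn
    have hhi : (x - u) / (2 * r) < i + 1 := Nat.lt_floor_add_one _
    have hiM : i < M := by
      have : i ≤ ⌊(v - u) / (2 * r)⌋₊ :=
        Nat.floor_le_floor (by gcongr <;> linarith)
      omega
    have hmem : u + r + 2 * r * i ∈ s := by
      simp only [hs, Finset.mem_image]
      exact ⟨i, Finset.mem_range.2 hiM, rfl⟩
    refine mem_iUnion.2 ⟨u + r + 2 * r * i, mem_iUnion.2 ⟨hmem, ?_⟩⟩
    simp only [mem_closedBall, Real.dist_eq]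
    rw [abs_le]
    constructor
    · nlinarith [(le_div_iff₀ h2r).1 hlo]
    · nlinarith [(div_lt_iff₀ h2r).1 hhi]
  calc coverNumber r E ≤ s.card := coverNumber_le_card s hcover
    _ ≤ (M : ℝ≥0∞) := by exact_mod_cast Finset.card_image_le.trans (by simp)

lemma sum_Ico_le_sum_subset (g : ℕ → ℝ) (hg0 : ∀ j, 0 ≤ g j)
    (hganti : ∀ i j, i ≤ j → g j ≤ g i) :
    ∀ (n K : ℕ) (In : Finset ℕ), In ⊆ Finset.range K → In.card = n →
      ∑ j ∈ Finset.Ico (K - n) K, g j ≤ ∑ j ∈ In, g j := by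
  intro n
  induction n with
  | zero =>
    intro K In _ hcard
    rw [Finset.card_eq_zero] at hcard
    simp [hcard]
  | succ n ih =>
    intro K In hsub hcard
    have hne : In.Nonempty := Finset.card_pos.1 (by omega)
    set M := In.max' hne with hM
    have hMmem : M ∈ In := In.max'_mem hne
    have hMK : M < K := Finset.mem_range.1 (hsub hMmem)
    set In' := In.erase M with hIn'
    have hcard' : In'.card = n := by
      rw [hIn', Finset.card_erase_of_mem hMmem, hcard]; omega
    have hsub' : In' ⊆ Finset.range M := by
      intro x hx
      have hxM : x ≤ M := In.le_max' x (Finset.mem_of_mem_erase hx)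
      have hxne : x ≠ M := Finset.ne_of_mem_erase hx
      exact Finset.mem_range.2 (lt_of_le_of_ne hxM hxne)
    have hnM : n ≤ M := by
      have := Finset.card_le_card hsub'
      simpa [hcard'] using this
    have ihM := ih M In' hsub' hcard'
    have hKpos : 1 ≤ K := by omega
    have hstep : ∑ j ∈ Finset.Ico (K - (n+1)) K, g j
        = (∑ j ∈ Finset.Ico (K - (n+1)) (K-1), g j) + g (K-1) := by
      have : K = (K - 1) + 1 := by omega
      rw [this, Finset.sum_Ico_succ_top (by omega)]
      congr 1 <;> congr 1 <;> omega
    have hcomp : ∑ j ∈ Finset.Ico (K - (n+1)) (K-1), g j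
        ≤ ∑ j ∈ Finset.Ico (M - n) M, g j := by
      rw [Finset.sum_Ico_eq_sum_range, Finset.sum_Ico_eq_sum_range]
      have h1 : K - 1 - (K - (n+1)) = n := by omega
      have h2 : M - (M - n) = n := by omega
      rw [h1, h2]
      apply Finset.sum_le_sum
      intro i _
      exact hganti _ _ (by omega)
    have hlast : g (K - 1) ≤ g M := hganti _ _ (by omega)
    have hfin : (∑ j ∈ In', g j) + g M = ∑ j ∈ In, g j := Finset.sum_erase_add In g hMmem
    linarith

def tTail (g : ℕ → ℝ) (k : ℕ) : ℝ := ∑' i, g (k + i)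

lemma tTail_summable {g : ℕ → ℝ} (hsum : Summable g) (k : ℕ) :
    Summable fun i => g (k + i) := by
  have := (summable_nat_add_iff k).2 hsum
  exact this.congr fun i => by rw [add_comm]

lemma tTail_succ {g : ℕ → ℝ} (hsum : Summable g) (k : ℕ) :
    tTail g k = g k + tTail g (k + 1) := by
  have h := tTail_summable hsum k
  have heq := Summable.tsum_eq_zero_add h
  simp only [add_zero] at heq
  rw [tTail, heq]
  congr 1
  rw [tTail]
  apply tsum_congr
  intro i
  congr 1
  omega

lemma tTail_nonneg {g : ℕ → ℝ} (hg : ∀ j, 0 < g j) (k : ℕ) : 0 ≤ tTail g k :=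
  tsum_nonneg fun i => (hg _).le

lemma tTail_pos {g : ℕ → ℝ} (hg : ∀ j, 0 < g j) (hsum : Summable g) (k : ℕ) :
    0 < tTail g k := by
  rw [tTail_succ hsum k]
  have := tTail_nonneg hg (k+1)
  linarith [hg k]

lemma tTail_sum_Ico {g : ℕ → ℝ} (hsum : Summable g) :
    ∀ {k m : ℕ}, k ≤ m → tTail g k = (∑ j ∈ Finset.Ico k m, g j) + tTail g m := by
  intro k m
  induction m with
  | zero => intro h; simp [Nat.le_zero.1 h]
  | succ m ih =>
    intro h
    rcases Nat.lt_or_ge k (m+1) with h1 | h2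
    · have hk : k ≤ m := by omega
      rw [Finset.sum_Ico_succ_top hk, ih hk, tTail_succ hsum m]
      ring
    · have : k = m + 1 := by omega
      simp [this]

lemma tTail_anti {g : ℕ → ℝ} (hg : ∀ j, 0 < g j) (hsum : Summable g) {k m : ℕ}
    (h : k ≤ m) : tTail g m ≤ tTail g k := by
  rw [tTail_sum_Ico hsum h]
  have : 0 ≤ ∑ j ∈ Finset.Ico k m, g j := Finset.sum_nonneg fun j _ => (hg j).le
  linarith

lemma tTail_tendsto {g : ℕ → ℝ} (hsum : Summable g) :
    Tendsto (tTail g) atTop (nhds 0) := by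
  have h := tendsto_sum_nat_add g
  apply h.congr
  intro k
  rw [tTail]
  apply tsum_congr
  intro i
  congr 1
  omega

/-- density: if all gaps beyond `K` are `< r`, every interval `[u, u+r] ⊆ [0, tTail g K]`
contains some `tTail g k`. -/
lemma tTail_dense {g : ℕ → ℝ} (hg : ∀ j, 0 < g j) (hsum : Summable g) {K : ℕ} {r u : ℝ}
    (hr : 0 < r) (hsmall : ∀ j, K ≤ j → g j < r) (hu : 0 ≤ u)
    (hur : u + r ≤ tTail g K) :
    ∃ k, u < tTail g k ∧ tTail g k < u + r := by
  have hne : ∃ m, tTail g m < u + r := by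
    have := tTail_tendsto hsum
    have hpos : (0:ℝ) < u + r := by linarith
    rcases (this.eventually (eventually_lt_nhds hpos)).exists with ⟨m, hm⟩
    exact ⟨m, hm⟩
  classical
  set k₀ := Nat.find hne with hk₀
  have hk₀spec : tTail g k₀ < u + r := Nat.find_spec hne
  have hk₀min : ∀ m < k₀, ¬ tTail g m < u + r := fun m hm => Nat.find_min hne hm
  have hk₀K : K < k₀ := by
    by_contra h
    push_neg at h
    have := tTail_anti hg hsum h
    linarith
  have h1 : u + r ≤ tTail g (k₀ - 1) := by
    have := hk₀min (k₀ - 1) (by omega)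
    linarith [not_lt.1 this]
  have h2 : tTail g (k₀ - 1) = g (k₀ - 1) + tTail g k₀ := by
    have : k₀ - 1 + 1 = k₀ := by omega
    rw [tTail_succ hsum (k₀ - 1), this]
  have h3 : g (k₀ - 1) < r := hsmall _ (by omega)
  exact ⟨k₀, by linarith, hk₀spec⟩

lemma tTail_def (g : ℕ → ℝ) (k : ℕ) : tTail g k = ∑' i, g (k + i) := rfl

lemma vol_complementary_zero (g c : ℕ → ℝ) (hg : ∀ j, 0 < g j) (hsum : Summable g)
    (htot : ∑' j, g j = 1) (hc : ∀ j, 0 ≤ c j ∧ c j + g j ≤ 1)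
    (hdisj : Pairwise fun i j => Disjoint (Ioo (c i) (c i + g i)) (Ioo (c j) (c j + g j))) :
    volume (Icc (0:ℝ) 1 \ ⋃ j, Ioo (c j) (c j + g j)) = 0 := by
  have hUsub : (⋃ j, Ioo (c j) (c j + g j)) ⊆ Icc (0:ℝ) 1 := by
    refine iUnion_subset fun j => ?_
    intro x hx
    rcases hx with ⟨h1, h2⟩
    exact ⟨le_of_lt (lt_of_le_of_lt (hc j).1 h1), le_of_lt (lt_of_lt_of_le h2 (hc j).2)⟩
  have hvolU : volume (⋃ j, Ioo (c j) (c j + g j)) = 1 := by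
    rw [measure_iUnion hdisj (fun j => measurableSet_Ioo)]
    have : ∀ j, volume (Ioo (c j) (c j + g j)) = ENNReal.ofReal (g j) := by
      intro j; rw [Real.volume_Ioo]; congr 1; ring
    simp_rw [this]
    rw [← ENNReal.ofReal_tsum_of_nonneg (fun j => (hg j).le) hsum, htot, ENNReal.ofReal_one]
  rw [measure_diff hUsub (MeasurableSet.iUnion fun j => measurableSet_Ioo).nullMeasurableSet
    (by rw [hvolU]; exact ENNReal.one_ne_top), hvolU, Real.volume_Icc]
  simp

set_option maxHeartbeats 1600000 in
lemma cover_bound_complementary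
    (g c : ℕ → ℝ) (hg : ∀ j, 0 < g j) (hsum : Summable g) (htot : ∑' j, g j = 1)
    (hc : ∀ j, 0 ≤ c j ∧ c j + g j ≤ 1)
    (hdisj : Pairwise fun i j => Disjoint (Ioo (c i) (c i + g i)) (Ioo (c j) (c j + g j)))
    (E : Set ℝ) (hE : E = Icc 0 1 \ ⋃ j, Ioo (c j) (c j + g j))
    (r R z : ℝ) (hr : 0 < r) (hrR : r ≤ R) (K : ℕ)
    (hbigK : ∀ j, j < K → r ≤ g j) (hsmallK : ∀ j, K ≤ j → g j < r) :
    ∃ N : ℕ, coverNumber r (closedBall z R ∩ E) ≤ (N : ℝ≥0∞) ∧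
      (N : ℝ) ≤ 2 * ((Finset.range K).filter
          (fun j => Ioo (c j) (c j + g j) ⊆ Icc (z - 2*R) (z + 2*R))).card
        + 6 + min (tTail g K) (4*R) / r := by
  classical
  have hR : 0 < R := lt_of_lt_of_le hr hrR
  set F := closedBall z R ∩ E with hF
  set U : ℕ → Set ℝ := fun j => Ioo (c j) (c j + g j) with hU
  set l : ℕ → ℝ := fun i => z - R + i * r with hl
  set M : ℕ := ⌊2*R/r⌋₊ + 1 with hM
  have hMr : (M : ℝ) * r ≤ 2*R + r := by
    have h1 : (⌊2*R/r⌋₊ : ℝ) ≤ 2*R/r := Nat.floor_le (by positivity)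
    have : (M:ℝ) = (⌊2*R/r⌋₊ : ℝ) + 1 := by exact_mod_cast rfl
    rw [this]
    rw [le_div_iff₀ hr] at h1
    nlinarith
  set bin : ℕ → Set ℝ := fun i => Ico (l i) (l i + r) with hbin
  -- each point is in at most one bin
  have bin_unique : ∀ (w : ℝ) (i i' : ℕ), w ∈ bin i → w ∈ bin i' → i = i' := by
    intro w i i' hi hi'
    by_contra hne
    rcases hi with ⟨hi1, hi2⟩
    rcases hi' with ⟨hi1', hi2'⟩
    simp only [hl] at hi1 hi2 hi1' hi2'
    rcases Nat.lt_or_ge i i' with h | h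
    · have : (i:ℝ) + 1 ≤ i' := by exact_mod_cast h
      nlinarith
    · have h' : i' < i := by omega
      have : (i':ℝ) + 1 ≤ i := by exact_mod_cast h'
      nlinarith
  have bin_subset : ∀ i, i < M → bin i ⊆ Icc (z - R) (z + 2*R) := by
    intro i hiM x hx
    rcases hx with ⟨h1, h2⟩
    simp only [hl] at h1 h2
    have hi' : (i:ℝ) + 1 ≤ M := by exact_mod_cast hiM
    have h3 : (i:ℝ)*r + r ≤ (M:ℝ)*r := by nlinarith
    constructor
    · have : 0 ≤ (i:ℝ) * r := by positivity
      linarith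
    · nlinarith
  set bad := (Finset.range M).filter (fun i => (bin i ∩ F).Nonempty) with hbad
  -- the cover
  have hcover : coverNumber r F ≤ bad.card := by
    set s := bad.image (fun i => l i + r/2) with hs
    have hsub : F ⊆ ⋃ x ∈ s, closedBall x r := by
      intro x hx
      have hxball : x ∈ closedBall z R := hx.1
      rw [mem_closedBall, Real.dist_eq, abs_le] at hxball
      set i : ℕ := ⌊(x - (z - R))/r⌋₊ with hi
      have hnn : 0 ≤ (x - (z-R))/r := div_nonneg (by linarith [hxball.1, hxball.2]) hr.le
      have hlo : (i:ℝ) ≤ (x - (z-R))/r := Nat.floor_le hnn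
      have hhi : (x - (z-R))/r < i + 1 := Nat.lt_floor_add_one _
      have hiM : i < M := by
        have : i ≤ ⌊2*R/r⌋₊ := Nat.floor_le_floor (by gcongr; linarith [hxball.2])
        omega
      have hxbin : x ∈ bin i := by
        rw [le_div_iff₀ hr] at hlo
        rw [div_lt_iff₀ hr] at hhi
        constructor
        · simp only [hl]; nlinarith
        · simp only [hl]; nlinarith
      have hibad : i ∈ bad := by
        rw [hbad, Finset.mem_filter]
        exact ⟨Finset.mem_range.2 hiM, ⟨x, hxbin, hx⟩⟩
      refine mem_iUnion.2 ⟨l i + r/2, mem_iUnion.2 ⟨Finset.mem_image_of_mem _ hibad, ?_⟩⟩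
      rw [mem_closedBall, Real.dist_eq, abs_le]
      simp only [hbin, mem_Ico] at hxbin
      obtain ⟨hb1, hb2⟩ := hxbin
      have hb1' : z - R + (i:ℝ) * r ≤ x := hb1
      have hb2' : x < z - R + (i:ℝ) * r + r := hb2
      constructor
      · show -r ≤ x - (z - R + (i:ℝ) * r + r / 2)
        linarith
      · show x - (z - R + (i:ℝ) * r + r / 2) ≤ r
        linarith
    calc coverNumber r F ≤ s.card := coverNumber_le_card s hsub
      _ ≤ (bad.card : ℝ≥0∞) := by exact_mod_cast Finset.card_image_le
  -- classification
  set PA : ℕ → Prop := fun i => ∃ j, j < K ∧ (U j ∩ bin i).Nonempty with hPA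
  set PB : ℕ → Prop := fun i => l i < 0 ∨ 1 < l i + r with hPB
  set A := bad.filter PA with hA
  set B := bad.filter PB with hB
  set C := bad.filter (fun i => ¬ PA i ∧ ¬ PB i) with hC
  have hbadsub : bad ⊆ A ∪ B ∪ C := by
    intro i hi
    simp only [hA, hB, hC, Finset.mem_union, Finset.mem_filter]
    by_cases h1 : PA i
    · exact Or.inl (Or.inl ⟨hi, h1⟩)
    · by_cases h2 : PB i
      · exact Or.inl (Or.inr ⟨hi, h2⟩)
      · exact Or.inr ⟨hi, h1, h2⟩
  have hcards : bad.card ≤ A.card + B.card + C.card :=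
    le_trans (Finset.card_le_card hbadsub)
      (le_trans (Finset.card_union_le _ _) (by gcongr; exact Finset.card_union_le _ _))
  -- B bound
  have filter_point_card : ∀ w : ℝ, ((Finset.range M).filter (fun i => w ∈ bin i)).card ≤ 1 := by
    intro w
    refine Finset.card_le_one.2 fun a ha b hb => ?_
    simp only [Finset.mem_filter] at ha hb
    exact bin_unique w a b ha.2 hb.2
  have hBcard : B.card ≤ 2 := by
    have hsub0 : B ⊆ (Finset.range M).filter (fun i => (0:ℝ) ∈ bin i)
        ∪ (Finset.range M).filter (fun i => (1:ℝ) ∈ bin i) := by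
      intro i hi
      simp only [hB, hbad, Finset.mem_filter] at hi
      obtain ⟨⟨hiM, x, hxbin, hxF⟩, hPBi⟩ := hi
      have hxE : x ∈ E := hxF.2
      have hx01 : x ∈ Icc (0:ℝ) 1 := by rw [hE] at hxE; exact hxE.1
      simp only [hbin, mem_Ico] at hxbin
      rcases hPBi with h0 | h1
      · refine Finset.mem_union_left _ (Finset.mem_filter.2 ⟨hiM, ?_⟩)
        simp only [hbin, mem_Ico]
        exact ⟨h0.le, lt_of_le_of_lt hx01.1 hxbin.2⟩
      · refine Finset.mem_union_right _ (Finset.mem_filter.2 ⟨hiM, ?_⟩)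
        simp only [hbin, mem_Ico]
        exact ⟨le_trans hxbin.1 hx01.2, h1⟩
    calc B.card ≤ _ := Finset.card_le_card hsub0
      _ ≤ _ + _ := Finset.card_union_le _ _
      _ ≤ 2 := by
        have := filter_point_card (0:ℝ)
        have := filter_point_card (1:ℝ)
        omega
  -- A bound
  set contained := (Finset.range K).filter
      (fun j => Ioo (c j) (c j + g j) ⊆ Icc (z - 2*R) (z + 2*R)) with hcontained
  set meets := (Finset.range K).filter
      (fun j => (U j ∩ Icc (z - 2*R) (z + 2*R)).Nonempty) with hmeets
  have endpoint_card : ∀ w : ℝ, ((Finset.range K).filter (fun j => w ∈ U j)).card ≤ 1 := by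
    intro w
    refine Finset.card_le_one.2 fun a ha b hb => ?_
    simp only [Finset.mem_filter] at ha hb
    by_contra hne
    exact Set.disjoint_left.1 (hdisj hne) ha.2 hb.2
  have hmeetscard : meets.card ≤ contained.card + 2 := by
    have hsub0 : meets ⊆ contained ∪ ((Finset.range K).filter (fun j => z - 2*R ∈ U j))
        ∪ ((Finset.range K).filter (fun j => z + 2*R ∈ U j)) := by
      intro j hj
      simp only [hmeets, Finset.mem_filter] at hj
      obtain ⟨hjK, w, hwU, hwI⟩ := hj
      by_cases hcont : U j ⊆ Icc (z - 2*R) (z + 2*R)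
      · exact Finset.mem_union_left _ (Finset.mem_union_left _
          (Finset.mem_filter.2 ⟨hjK, hcont⟩))
      · rw [not_subset] at hcont
        obtain ⟨v, hvU, hvI⟩ := hcont
        simp only [mem_Icc, not_and_or, not_le] at hvI
        simp only [hU, mem_Ioo] at hwU hvU
        rw [mem_Icc] at hwI
        rcases hvI with hv | hv
        · refine Finset.mem_union_left _ (Finset.mem_union_right _
            (Finset.mem_filter.2 ⟨hjK, ?_⟩))
          simp only [hU, mem_Ioo]
          exact ⟨lt_trans hvU.1 hv, lt_of_le_of_lt hwI.1 hwU.2⟩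
        · refine Finset.mem_union_right _ (Finset.mem_filter.2 ⟨hjK, ?_⟩)
          simp only [hU, mem_Ioo]
          exact ⟨lt_of_lt_of_le hwU.1 hwI.2, lt_trans hv hvU.2⟩
    calc meets.card ≤ _ := Finset.card_le_card hsub0
      _ ≤ _ + _ := Finset.card_union_le _ _
      _ ≤ contained.card + 2 := by
        have h1 := Finset.card_union_le contained
          ((Finset.range K).filter (fun j => z - 2*R ∈ U j))
        have := endpoint_card (z - 2*R)
        have := endpoint_card (z + 2*R)
        omega
  have hAcard : A.card ≤ 2 * (contained.card + 2) := by
    have hsub0 : A ⊆ meets.biUnion (fun j => (Finset.range M).filter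
        (fun i => c j ∈ bin i ∨ c j + g j ∈ bin i)) := by
      intro i hi
      simp only [hA, hbad, Finset.mem_filter] at hi
      obtain ⟨⟨hiM, x, hxbin, hxF⟩, j, hjK, y, hyU, hybin⟩ := hi
      have hxE : x ∈ E := hxF.2
      have hxnotU : x ∉ U j := by
        rw [hE] at hxE
        intro hxU
        exact hxE.2 (mem_iUnion.2 ⟨j, hxU⟩)
      refine Finset.mem_biUnion.2 ⟨j, ?_, ?_⟩
      · refine Finset.mem_filter.2 ⟨Finset.mem_range.2 hjK, ⟨y, hyU, ?_⟩⟩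
        have := bin_subset i (Finset.mem_range.1 hiM) hybin
        rw [mem_Icc] at this ⊢
        constructor <;> [linarith [this.1]; exact this.2]
      · refine Finset.mem_filter.2 ⟨hiM, ?_⟩
        simp only [hU, mem_Ioo] at hyU hxnotU
        push_neg at hxnotU
        simp only [hbin, mem_Ico] at hxbin hybin ⊢
        by_cases hxc : x ≤ c j
        · left
          exact ⟨le_trans hxbin.1 hxc, lt_trans hyU.1 hybin.2⟩
        · right
          push_neg at hxc
          have hxc2 : c j + g j ≤ x := hxnotU hxc
          exact ⟨(lt_of_le_of_lt hybin.1 hyU.2).le, lt_of_le_of_lt hxc2 hxbin.2⟩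
    calc A.card ≤ _ := Finset.card_le_card hsub0
      _ ≤ ∑ j ∈ meets, ((Finset.range M).filter
          (fun i => c j ∈ bin i ∨ c j + g j ∈ bin i)).card := Finset.card_biUnion_le
      _ ≤ ∑ _j ∈ meets, 2 := by
        refine Finset.sum_le_sum fun j _ => ?_
        have hsub1 : (Finset.range M).filter (fun i => c j ∈ bin i ∨ c j + g j ∈ bin i)
            ⊆ (Finset.range M).filter (fun i => c j ∈ bin i)
              ∪ (Finset.range M).filter (fun i => c j + g j ∈ bin i) := by
          intro i hi
          simp only [Finset.mem_filter, Finset.mem_union] at hi ⊢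
          rcases hi.2 with h | h
          · exact Or.inl ⟨hi.1, h⟩
          · exact Or.inr ⟨hi.1, h⟩
        calc _ ≤ _ := Finset.card_le_card hsub1
          _ ≤ _ + _ := Finset.card_union_le _ _
          _ ≤ 2 := by
            have := filter_point_card (c j)
            have := filter_point_card (c j + g j)
            omega
      _ = 2 * meets.card := by rw [Finset.sum_const, smul_eq_mul, mul_comm]
      _ ≤ 2 * (contained.card + 2) := by omega
  -- C bound
  set Ssmall : Set ℝ := ⋃ j : ℕ, U (K + j) with hSsmall
  have hSmeas : MeasurableSet Ssmall := MeasurableSet.iUnion fun j => measurableSet_Ioo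
  have hvolE : volume E = 0 := by
    rw [hE]
    exact vol_complementary_zero g c hg hsum htot hc hdisj
  have hCvol : ∀ i ∈ C, ENNReal.ofReal r ≤ volume (bin i ∩ Ssmall) := by
    intro i hi
    simp only [hC, hbad, Finset.mem_filter] at hi
    obtain ⟨⟨hiM, -⟩, hnPA, hnPB⟩ := hi
    simp only [hPB, not_or, not_lt] at hnPB
    have hbinsub : bin i ⊆ Icc (0:ℝ) 1 := by
      intro x hx
      simp only [hbin, mem_Ico] at hx
      exact ⟨le_trans hnPB.1 hx.1, le_trans hx.2.le hnPB.2⟩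
    have hsplit : bin i ⊆ (bin i ∩ Ssmall) ∪ E := by
      intro x hx
      by_cases hxU : ∃ j, x ∈ U j
      · obtain ⟨j, hxj⟩ := hxU
        have hjK : K ≤ j := by
          by_contra h
          push_neg at h
          exact hnPA ⟨j, h, ⟨x, hxj, hx⟩⟩
        left
        refine ⟨hx, mem_iUnion.2 ⟨j - K, ?_⟩⟩
        rwa [Nat.add_sub_cancel' hjK]
      · right
        rw [hE]
        push_neg at hxU
        exact ⟨hbinsub hx, fun hmem => by
          obtain ⟨j, hj⟩ := mem_iUnion.1 hmem
          exact hxU j hj⟩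
    calc ENNReal.ofReal r = volume (bin i) := by
          simp only [hbin]
          rw [Real.volume_Ico]
          congr 1
          ring
      _ ≤ volume ((bin i ∩ Ssmall) ∪ E) := measure_mono hsplit
      _ ≤ volume (bin i ∩ Ssmall) + volume E := measure_union_le _ _
      _ = volume (bin i ∩ Ssmall) := by rw [hvolE, add_zero]
  have hCsum : (C.card : ℝ≥0∞) * ENNReal.ofReal r ≤ volume (⋃ i ∈ C, bin i ∩ Ssmall) := by
    rw [measure_biUnion_finset ?_ (fun i _ => measurableSet_Ico.inter hSmeas)]
    · calc (C.card : ℝ≥0∞) * ENNReal.ofReal r = ∑ _i ∈ C, ENNReal.ofReal r := by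
            rw [Finset.sum_const, nsmul_eq_mul]
        _ ≤ _ := Finset.sum_le_sum hCvol
    · intro i hi j hj hne
      have hd : Disjoint (bin i) (bin j) := by
        rw [Set.disjoint_left]
        intro w hwi hwj
        exact hne (bin_unique w i j hwi hwj)
      exact hd.mono inter_subset_left inter_subset_left
  have hvolSsmall : volume Ssmall ≤ ENNReal.ofReal (tTail g K) := by
    calc volume Ssmall ≤ ∑' j, volume (U (K + j)) := measure_iUnion_le _
      _ = ∑' j, ENNReal.ofReal (g (K + j)) := by
          apply tsum_congr
          intro j
          simp only [hU]
          rw [Real.volume_Ioo]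
          congr 1
          ring
      _ = ENNReal.ofReal (∑' j, g (K + j)) := by
          rw [← ENNReal.ofReal_tsum_of_nonneg (fun j => (hg _).le) ?_]
          have := (summable_nat_add_iff K).2 hsum
          exact this.congr fun i => by rw [add_comm]
      _ = ENNReal.ofReal (tTail g K) := by rw [tTail_def]
  have hvolbins : volume (⋃ i ∈ C, bin i ∩ Ssmall) ≤ ENNReal.ofReal (4*R) := by
    have hsub0 : (⋃ i ∈ C, bin i ∩ Ssmall) ⊆ Icc (z - R) (z + 2*R) := by
      refine iUnion₂_subset fun i hi => ?_
      have hiM : i < M := by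
        simp only [hC, hbad, Finset.mem_filter, Finset.mem_range] at hi
        exact hi.1.1
      exact (inter_subset_left).trans (bin_subset i hiM)
    calc volume _ ≤ volume (Icc (z - R) (z + 2*R)) := measure_mono hsub0
      _ = ENNReal.ofReal (3*R) := by rw [Real.volume_Icc]; congr 1; ring
      _ ≤ ENNReal.ofReal (4*R) := ENNReal.ofReal_le_ofReal (by linarith)
  have hvolS2 : volume (⋃ i ∈ C, bin i ∩ Ssmall) ≤ ENNReal.ofReal (tTail g K) := by
    refine le_trans (measure_mono ?_) hvolSsmall
    exact iUnion₂_subset fun i _ => inter_subset_right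
  have htT0 : 0 ≤ tTail g K := by
    rw [tTail_def]
    exact tsum_nonneg fun i => (hg _).le
  have hCreal : (C.card : ℝ) * r ≤ min (tTail g K) (4*R) := by
    have h1 : ENNReal.ofReal ((C.card : ℝ) * r) ≤ ENNReal.ofReal (min (tTail g K) (4*R)) := by
      rw [ENNReal.ofReal_mul (by positivity), ENNReal.ofReal_natCast]
      rcases min_cases (tTail g K) (4*R) with ⟨heq, -⟩ | ⟨heq, -⟩ <;> rw [heq]
      · exact le_trans hCsum hvolS2
      · exact le_trans hCsum hvolbins
    exact (ENNReal.ofReal_le_ofReal_iff (le_min htT0 (by linarith))).1 h1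
  -- conclusion
  refine ⟨2 * contained.card + 6 + C.card, ?_, ?_⟩
  · refine le_trans hcover ?_
    have : bad.card ≤ 2 * contained.card + 6 + C.card := by omega
    exact_mod_cast this
  · have hCdiv : (C.card : ℝ) ≤ min (tTail g K) (4*R) / r := (le_div_iff₀ hr).2 hCreal
    push_cast
    linarith




set_option maxHeartbeats 1600000 in
lemma lower_bound_decreasing (g : ℕ → ℝ) (hg : ∀ j, 0 < g j) (hsum : Summable g)
    (D : Set ℝ) (hD : ∀ k, tTail g k ∈ D) (r R : ℝ) (hr : 0 < r)
    (K nn q : ℕ)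
    (hbigK : ∀ j, j < K → r ≤ g j) (hsmallK : ∀ j, K ≤ j → g j < r)
    (hnnK : nn ≤ K)
    (hsumnn : ∑ j ∈ Finset.Ico (K - nn) K, g j ≤ 4*R)
    (hq : (q : ℝ) * (4*r) ≤ min (tTail g K) (4*R)) :
    ((q + (nn/3 + 1) : ℕ) : ℝ≥0∞) ≤ coverNumber r (closedBall (tTail g K) (4*R) ∩ D) := by
  classical
  set T := min (tTail g K) (4*R) with hT
  have hTt : T ≤ tTail g K := min_le_left _ _
  have hTR : T ≤ 4*R := min_le_right _ _
  set pick : ℕ → ℝ := fun i => if h : ∃ k, (tTail g K - 4*r*(i+1) < tTail g k ∧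
      tTail g k < tTail g K - 4*r*(i+1) + r) then tTail g h.choose else 0 with hpickdef
  have hpick : ∀ i, i < q → (tTail g K - 4*r*((i:ℝ)+1) < pick i ∧
      pick i < tTail g K - 4*r*((i:ℝ)+1) + r) ∧ pick i ∈ D := by
    intro i hi
    have hu0 : 0 ≤ tTail g K - 4*r*((i:ℝ)+1) := by
      have h1 : ((i:ℝ)+1) ≤ q := by exact_mod_cast hi
      nlinarith [hTt]
    have hur : (tTail g K - 4*r*((i:ℝ)+1)) + r ≤ tTail g K := by nlinarith
    have hex : ∃ k, (tTail g K - 4*r*((i:ℝ)+1) < tTail g k ∧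
        tTail g k < tTail g K - 4*r*((i:ℝ)+1) + r) :=
      tTail_dense hg hsum hr hsmallK hu0 hur
    constructor
    · simp only [hpickdef, dif_pos hex]
      exact hex.choose_spec
    · simp only [hpickdef, dif_pos hex]
      exact hD _
  set total := q + (nn/3 + 1) with htotal
  set pt : ℕ → ℝ := fun i => if i < q then pick (q - 1 - i) else tTail g (K - 3*(i - q))
    with hpt
  -- pt is within the ball and in D
  have hptmem : ∀ i, i < total → pt i ∈ closedBall (tTail g K) (4*R) ∩ D := by
    intro i hi
    by_cases hiq : i < q
    · have h := hpick (q - 1 - i) (by omega)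
      refine ⟨?_, by simp only [hpt, if_pos hiq]; exact h.2⟩
      simp only [hpt, if_pos hiq, mem_closedBall, Real.dist_eq, abs_le]
      have h1 := h.1.1
      have h2 := h.1.2
      have hcast : ((q - 1 - i : ℕ) : ℝ) + 1 ≤ q := by
        have : (q - 1 - i : ℕ) + 1 ≤ q := by omega
        exact_mod_cast this
      constructor
      · have : 4*r*(((q-1-i:ℕ):ℝ)+1) ≤ 4*r*q := by nlinarith
        nlinarith [hTR, hTt]
      · nlinarith
    · have h3 : 3*(i - q) ≤ nn := by omega
      have hsub : tTail g (K - 3*(i-q)) = (∑ j ∈ Finset.Ico (K - 3*(i-q)) K, g j)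
          + tTail g K := tTail_sum_Ico hsum (by omega)
      have hsum1 : ∑ j ∈ Finset.Ico (K - 3*(i-q)) K, g j
          ≤ ∑ j ∈ Finset.Ico (K - nn) K, g j := by
        apply Finset.sum_le_sum_of_subset_of_nonneg
        · apply Finset.Ico_subset_Ico (by omega) le_rfl
        · intro j _ _; exact (hg j).le
      refine ⟨?_, by simp only [hpt, if_neg hiq]; exact hD _⟩
      simp only [hpt, if_neg hiq, mem_closedBall, Real.dist_eq, abs_le]
      have hnonneg : 0 ≤ ∑ j ∈ Finset.Ico (K - 3*(i-q)) K, g j :=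
        Finset.sum_nonneg fun j _ => (hg j).le
      constructor
      · rw [hsub]; nlinarith [hr]
      · rw [hsub]; nlinarith [hsumnn, hsum1]
  -- gaps
  have hgap : ∀ i j, i < j → j < total → pt i + 2*r < pt j := by
    intro i j hij hj
    by_cases hjq : j < q
    · -- both picks
      have hiq : i < q := by omega
      set a := q - 1 - i with ha
      set b := q - 1 - j with hb
      have hab : b + 1 ≤ a := by omega
      have hA := (hpick a (by omega)).1
      have hB := (hpick b (by omega)).1
      simp only [hpt, if_pos hiq, if_pos hjq]
      have hcast : ((b:ℝ) + 1) + 1 ≤ (a:ℝ) + 1 := by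
        have : (b:ℕ) + 1 ≤ a := hab
        have := (Nat.cast_le (α := ℝ)).2 this
        push_cast at this ⊢
        linarith
      nlinarith [hA.1, hA.2, hB.1, hB.2, hr]
    · by_cases hiq : i < q
      · -- pick vs tail point
        set a := q - 1 - i with ha
        have hA := (hpick a (by omega)).1
        simp only [hpt, if_pos hiq, if_neg hjq]
        have htail : tTail g K ≤ tTail g (K - 3*(j - q)) := tTail_anti hg hsum (by omega)
        have hcast : (1:ℝ) ≤ (a:ℝ) + 1 := by
          have : (0:ℝ) ≤ (a:ℝ) := Nat.cast_nonneg a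
          linarith
        nlinarith [hA.2, hr]
      · -- both tail points
        set a := i - q with ha
        set b := j - q with hb
        have hab : a < b := by omega
        have h3b : 3*b ≤ nn := by omega
        simp only [hpt, if_neg hiq, if_neg hjq]
        have hKb : K - 3*b ≤ K - 3*a := by omega
        have hsplit : tTail g (K - 3*b) = (∑ x ∈ Finset.Ico (K - 3*b) (K - 3*a), g x)
            + tTail g (K - 3*a) := tTail_sum_Ico hsum hKb
        have hcard : (Finset.Ico (K - 3*b) (K - 3*a)).card = 3*b - 3*a := by
          rw [Nat.card_Ico]; omega
        have heach : ∀ x ∈ Finset.Ico (K - 3*b) (K - 3*a), r ≤ g x := by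
          intro x hx
          rw [Finset.mem_Ico] at hx
          exact hbigK x (by omega)
        have hsumlb : (3:ℝ) * r ≤ ∑ x ∈ Finset.Ico (K - 3*b) (K - 3*a), g x := by
          calc (3:ℝ) * r ≤ ((3*b - 3*a : ℕ) : ℝ) * r := by
                have h1 : (3:ℕ) ≤ 3*b - 3*a := by omega
                have : (3:ℝ) ≤ ((3*b - 3*a : ℕ):ℝ) := by exact_mod_cast h1
                nlinarith
            _ ≤ _ := by
                rw [← hcard]
                have := Finset.card_nsmul_le_sum (Finset.Ico (K - 3*b) (K - 3*a)) g r heach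
                simpa [nsmul_eq_mul] using this
        rw [hsplit]
        linarith
  -- build the finset
  set P := (Finset.range total).image pt with hP
  have hinj : Set.InjOn pt (Finset.range total) := by
    intro i hi j hj hijeq
    by_contra hne
    rcases Nat.lt_or_ge i j with h | h
    · have := hgap i j h (by simpa using hj)
      rw [hijeq] at this
      linarith
    · have h' : j < i := by omega
      have := hgap j i h' (by simpa using hi)
      rw [hijeq] at this
      linarith
  have hPcard : P.card = total := by
    rw [hP, Finset.card_image_of_injOn hinj, Finset.card_range]
  have := le_coverNumber_of_separated (r := r) P
    (fun p hp => by
      rw [hP, Finset.mem_image] at hp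
      obtain ⟨i, hi, rfl⟩ := hp
      exact hptmem i (Finset.mem_range.1 hi))
    (fun p hp p' hp' hne => by
      rw [hP, Finset.mem_image] at hp hp'
      obtain ⟨i, hi, rfl⟩ := hp
      obtain ⟨i', hi', rfl⟩ := hp'
      rw [Finset.mem_range] at hi hi'
      have hneij : i ≠ i' := fun h => hne (by rw [h])
      rcases Nat.lt_or_ge i i' with h | h
      · have := hgap i i' h hi'
        rw [abs_sub_comm, abs_of_pos (by linarith)]
        linarith
      · have h' : i' < i := by omega
        have := hgap i' i h' hi
        rw [abs_of_pos (by linarith)]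
        linarith)
  rwa [hPcard] at this

lemma sum_gaps_le (g c : ℕ → ℝ) (hg : ∀ j, 0 < g j)
    (hdisj : Pairwise fun i j => Disjoint (Ioo (c i) (c i + g i)) (Ioo (c j) (c j + g j)))
    (In : Finset ℕ) {u v : ℝ} (huv : u ≤ v)
    (hsub : ∀ j ∈ In, Ioo (c j) (c j + g j) ⊆ Icc u v) :
    ∑ j ∈ In, g j ≤ v - u := by
  have hmeas : volume (⋃ j ∈ In, Ioo (c j) (c j + g j)) = ∑ j ∈ In, ENNReal.ofReal (g j) := by
    rw [measure_biUnion_finset ?_ (fun j _ => measurableSet_Ioo)]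
    · exact Finset.sum_congr rfl fun j _ => by rw [Real.volume_Ioo]; congr 1; ring
    · intro i _ j _ hne
      exact hdisj hne
  have h1 : (∑ j ∈ In, ENNReal.ofReal (g j)) ≤ ENNReal.ofReal (v - u) := by
    rw [← hmeas, ← Real.volume_Icc]
    exact measure_mono (iUnion₂_subset hsub)
  have h2 : ∑ j ∈ In, ENNReal.ofReal (g j) = ENNReal.ofReal (∑ j ∈ In, g j) := by
    rw [ENNReal.ofReal_sum_of_nonneg fun j _ => (hg j).le]
  rw [h2] at h1
  exact (ENNReal.ofReal_le_ofReal_iff (by linarith)).1 h1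



lemma rpow_facts (Φ : ℝ → ℝ) (hΦ : IsDimensionFunction Φ) {R : ℝ} (h0 : 0 < R)
    (h1 : R < 1) : 0 < R ^ (1 + Φ R) ∧ R ^ (1 + Φ R) ≤ R := by
  have hφ := hΦ.1 R ⟨h0, h1⟩
  refine ⟨Real.rpow_pos_of_pos h0 _, ?_⟩
  calc R ^ (1 + Φ R) ≤ R ^ (1:ℝ) :=
        Real.rpow_le_rpow_of_exponent_ge h0 h1.le (by linarith)
    _ = R := Real.rpow_one R

lemma exists_small_r (ρ R β : ℝ) (hρ : 0 < ρ) (hR : 0 < R) :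
    ∃ r : ℝ, 0 < r ∧ r ≤ ρ ∧ β ≤ Real.log (R / r) := by
  set r := min ρ (R * Real.exp (-β)) with hrdef
  have hr0 : 0 < r := lt_min hρ (by positivity)
  refine ⟨r, hr0, min_le_left _ _, ?_⟩
  have h1 : r ≤ R * Real.exp (-β) := min_le_right _ _
  have h3 : Real.exp β ≤ R / r := by
    rw [le_div_iff₀ hr0]
    calc Real.exp β * r ≤ Real.exp β * (R * Real.exp (-β)) :=
          mul_le_mul_of_nonneg_left h1 (Real.exp_nonneg β)
      _ = R * (Real.exp β * Real.exp (-β)) := by ring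
      _ = R := by rw [← Real.exp_add, add_neg_cancel, Real.exp_zero, mul_one]
  calc β = Real.log (Real.exp β) := (Real.log_exp β).symm
    _ ≤ Real.log (R / r) := Real.log_le_log (Real.exp_pos β) h3

lemma zero_mem_lowerSet (Φ : ℝ → ℝ) (X : Set ℝ) :
    ∃ c₁ > (0:ℝ), ∃ c₂ > (0:ℝ), ∀ r R : ℝ,
      0 < r → r ≤ R ^ (1 + Φ R) → R ^ (1 + Φ R) ≤ R → R < c₁ → ∀ z ∈ X,
        ENNReal.ofReal (c₂ * (R / r) ^ (0:ℝ)) ≤ coverNumber r (closedBall z R ∩ X) := by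
  refine ⟨1, one_pos, 1, one_pos, ?_⟩
  intro r R hr h1 h2 _ z hz
  have hR0 : 0 < R := lt_of_lt_of_le hr (le_trans h1 h2)
  have heq : ENNReal.ofReal ((1:ℝ) * (R/r) ^ (0:ℝ)) = 1 := by
    rw [Real.rpow_zero, mul_one, ENNReal.ofReal_one]
  rw [heq]
  exact one_le_coverNumber ⟨z, mem_closedBall_self hR0.le, hz⟩

lemma one_mem_upperSet (Φ : ℝ → ℝ) (X : Set ℝ) :
    ∃ c₁ > (0:ℝ), ∃ c₂ > (0:ℝ), ∀ r R : ℝ,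
      0 < r → r ≤ R ^ (1 + Φ R) → R ^ (1 + Φ R) ≤ R → R < c₁ → ∀ z ∈ X,
        coverNumber r (closedBall z R ∩ X) ≤ ENNReal.ofReal (c₂ * (R / r) ^ (1:ℝ)) := by
  refine ⟨1, one_pos, 2, two_pos, ?_⟩
  intro r R hr h1 h2 _ z hz
  have hR0 : 0 < R := lt_of_lt_of_le hr (le_trans h1 h2)
  have hrR : r ≤ R := le_trans h1 h2
  have hsub : closedBall z R ∩ X ⊆ Icc (z - R) (z + R) := by
    intro x hx
    have hx1 := hx.1
    rw [mem_closedBall, Real.dist_eq, abs_le] at hx1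
    exact ⟨by linarith [hx1.1], by linarith [hx1.2]⟩
  have hcov := coverNumber_le_Icc hr (by linarith : z - R ≤ z + R) hsub
  refine le_trans hcov ?_
  have heq : (z + R - (z - R)) / (2*r) = R / r := by
    rw [div_eq_div_iff (by linarith) hr.ne']
    ring
  have h1' : (⌊(z + R - (z - R)) / (2*r)⌋₊ : ℝ) ≤ R / r := by
    rw [heq]
    exact Nat.floor_le (by positivity)
  have hge1 : 1 ≤ R / r := (one_le_div hr).2 hrR
  have hfloor : ((⌊(z + R - (z - R)) / (2*r)⌋₊ + 1 : ℕ) : ℝ) ≤ 2 * (R/r) := by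
    push_cast
    linarith
  calc ((⌊(z + R - (z - R)) / (2*r)⌋₊ + 1 : ℕ) : ℝ≥0∞)
      = ENNReal.ofReal ((⌊(z + R - (z - R)) / (2*r)⌋₊ + 1 : ℕ) : ℝ) :=
        (ENNReal.ofReal_natCast _).symm
    _ ≤ ENNReal.ofReal (2 * (R/r) ^ (1:ℝ)) :=
        ENNReal.ofReal_le_ofReal (by rw [Real.rpow_one]; exact hfloor)

/-- Among the complementary sets of a decreasing summable sequence, the decreasing
rearrangement `D_a` has the maximal upper `Φ`-dimension and the minimal (namely zero)
lower `Φ`-dimension. -/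
theorem decreasingSet_extremal_phiDim (a : ℕ → ℝ)
    (hpos : ∀ j : ℕ, 0 < a (j + 1)) (hdec : ∀ j : ℕ, a (j + 2) ≤ a (j + 1))
    (hsum : Summable fun j : ℕ => a (j + 1)) (htot : ∑' j : ℕ, a (j + 1) = 1)
    (Φ : ℝ → ℝ) (hΦ : IsDimensionFunction Φ)
    (E : Set ℝ) (hE : IsComplementarySet a E) :
    upperPhiDim Φ E ≤ upperPhiDim Φ (decreasingSet a) ∧
    lowerPhiDim Φ (decreasingSet a) ≤ lowerPhiDim Φ E ∧
    lowerPhiDim Φ (decreasingSet a) = 0 := by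
  classical
  obtain ⟨c, hc, hdisj, hEeq⟩ := hE
  set g : ℕ → ℝ := fun j => a (j + 1) with hgdef
  have hg0 : ∀ j, 0 < g j := hpos
  have hganti : ∀ i j : ℕ, i ≤ j → g j ≤ g i := by
    have h : Antitone g := antitone_nat_of_succ_le (fun n => hdec n)
    exact fun i j hij => h hij
  have hgsum : Summable g := hsum
  have hgtot : ∑' j, g j = 1 := htot
  have hD : ∀ k, tTail g k ∈ decreasingSet a := by
    intro k
    refine ⟨k, ?_⟩
    show (∑' i, a (k + 1 + i)) = tTail g k
    rw [tTail_def]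
    exact tsum_congr fun i => by show a (k+1+i) = g (k+i); rw [hgdef]; congr 1; omega
  have ht0 : tTail g 0 = 1 := by
    rw [tTail_def, ← hgtot]
    exact tsum_congr fun i => by rw [Nat.zero_add]
  have hE0 : (0:ℝ) ∈ E := by
    rw [hEeq]
    constructor
    · exact ⟨le_refl 0, zero_le_one⟩
    · intro hmem
      simp only [mem_iUnion, mem_Ioo] at hmem
      obtain ⟨j, hj1, hj2⟩ := hmem
      exact absurd hj1 (not_lt.2 (hc j).1)
  have hΦ0 := hΦ.1
  have hΦmono := hΦ.2.1
  -- Part 3: lowerPhiDim of the decreasing set is 0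
  have hlowerD : lowerPhiDim Φ (decreasingSet a) = 0 := by
    unfold lowerPhiDim
    apply IsGreatest.csSup_eq
    constructor
    · exact zero_mem_lowerSet Φ (decreasingSet a)
    · rintro α ⟨c₁, hc₁, c₂, hc₂, h⟩
      by_contra hα
      push_neg at hα
      have h01 : 0 < min c₁ 1 := lt_min hc₁ one_pos
      set R := min (min c₁ 1 / 2) (g 0 / 2) with hRdef
      have hg00 := hg0 0
      have hR0 : 0 < R := lt_min (by linarith) (by linarith)
      have hR1 : R < 1 := by
        have h2 := min_le_left (min c₁ 1 / 2) (g 0 / 2)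
        have h3 := min_le_right c₁ 1
        linarith
      have hRc : R < c₁ := by
        have h2 := min_le_left (min c₁ 1 / 2) (g 0 / 2)
        have h3 := min_le_left c₁ 1
        linarith
      have hRg : R < g 0 := by
        have h2 := min_le_right (min c₁ 1 / 2) (g 0 / 2)
        linarith
      obtain ⟨hρ0, hρR⟩ := rpow_facts Φ hΦ hR0 hR1
      obtain ⟨r, hr0, hrρ, hrlog⟩ :=
        exists_small_r (R ^ (1 + Φ R)) R ((|Real.log (2/c₂)| + 1)/α) hρ0 hR0
      have h1D : (1:ℝ) ∈ decreasingSet a := ht0 ▸ hD 0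
      have happ := h r R hr0 hrρ hρR hRc 1 h1D
      have hsub1 : closedBall (1:ℝ) R ∩ decreasingSet a
          ⊆ ⋃ x ∈ ({(1:ℝ)} : Finset ℝ), closedBall x r := by
        rintro x ⟨hx1, hx2⟩
        obtain ⟨k, hk⟩ := hx2
        have hkt : tTail g k = x := by
          rw [tTail_def, ← hk]
          exact tsum_congr fun i => by show a ((k+i)+1) = a (k+1+i); congr 1; omega
        have hx1' : |x - 1| ≤ R := by rwa [mem_closedBall, Real.dist_eq] at hx1
        have hxeq : x = 1 := by
          rcases Nat.eq_zero_or_pos k with h0 | hposk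
          · rw [← hkt, h0, ht0]
          · exfalso
            have h1k : tTail g k ≤ tTail g 1 := tTail_anti hg0 hgsum hposk
            have hss : tTail g 0 = g 0 + tTail g 1 := tTail_succ hgsum 0
            have htk1 : tTail g k ≤ 1 - g 0 := by rw [ht0] at hss; linarith
            rw [← hkt, abs_le] at hx1'
            linarith [hx1'.1]
        subst hxeq
        simp only [Finset.mem_singleton, mem_iUnion]
        exact ⟨1, rfl, mem_closedBall_self hr0.le⟩
      have hcov1 : coverNumber r (closedBall (1:ℝ) R ∩ decreasingSet a) ≤ 1 := by
        have h2 := coverNumber_le_card ({(1:ℝ)} : Finset ℝ) hsub1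
        simpa using h2
      have hRr : 0 < R / r := div_pos hR0 hr0
      have hval : 2 ≤ c₂ * (R / r) ^ α := by
        have hrw : (R / r) ^ α = Real.exp (Real.log (R/r) * α) := Real.rpow_def_of_pos hRr α
        have hβ : (|Real.log (2/c₂)| + 1) ≤ Real.log (R/r) * α := by
          have h2 := mul_le_mul_of_nonneg_right hrlog hα.le
          rwa [div_mul_cancel₀ _ (ne_of_gt hα)] at h2
        have h2c : Real.exp (Real.log (2/c₂)) = 2/c₂ := Real.exp_log (by positivity)
        have hlt : 2/c₂ < Real.exp (Real.log (R/r) * α) := by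
          rw [← h2c]
          apply Real.exp_lt_exp.2
          have := le_abs_self (Real.log (2/c₂))
          linarith
        rw [hrw]
        rw [div_lt_iff₀ hc₂] at hlt
        linarith [hlt]
      have h2of : (2:ℝ≥0∞) ≤ ENNReal.ofReal (c₂ * (R/r)^α) := by
        have := ENNReal.ofReal_le_ofReal hval
        rwa [ENNReal.ofReal_ofNat] at this
      have hcontr : (2:ℝ≥0∞) ≤ 1 := le_trans h2of (le_trans happ hcov1)
      norm_num at hcontr
  refine ⟨?_, ?_, hlowerD⟩
  · -- upper phi dim comparison
    unfold upperPhiDim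
    have hbdd : BddBelow {α : ℝ | ∃ c₁ > (0:ℝ), ∃ c₂ > (0:ℝ), ∀ r R : ℝ,
        0 < r → r ≤ R ^ (1 + Φ R) → R ^ (1 + Φ R) ≤ R → R < c₁ → ∀ z ∈ E,
          coverNumber r (closedBall z R ∩ E) ≤ ENNReal.ofReal (c₂ * (R / r) ^ α)} := by
      refine ⟨0, fun α hα => ?_⟩
      by_contra hneg
      push_neg at hneg
      obtain ⟨c₁, hc₁, c₂, hc₂, h⟩ := hα
      have h01 : 0 < min c₁ 1 := lt_min hc₁ one_pos
      set R := min c₁ 1 / 2 with hRdef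
      have hR0 : 0 < R := by linarith
      have hR1 : R < 1 := by
        have h3 := min_le_right c₁ 1
        linarith
      have hRc : R < c₁ := by
        have h3 := min_le_left c₁ 1
        linarith
      obtain ⟨hρ0, hρR⟩ := rpow_facts Φ hΦ hR0 hR1
      obtain ⟨r, hr0, hrρ, hrlog⟩ :=
        exists_small_r (R ^ (1 + Φ R)) R ((|Real.log c₂| + 1)/(-α)) hρ0 hR0
      have happ := h r R hr0 hrρ hρR hRc 0 hE0
      have hone : (1:ℝ≥0∞) ≤ coverNumber r (closedBall (0:ℝ) R ∩ E) :=
        one_le_coverNumber ⟨0, mem_closedBall_self hR0.le, hE0⟩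
      have hRr : 0 < R / r := div_pos hR0 hr0
      have hval : c₂ * (R/r)^α < 1 := by
        have hrw : (R/r)^α = Real.exp (Real.log (R/r) * α) := Real.rpow_def_of_pos hRr α
        have hαneg : 0 < -α := by linarith
        have hβ : (|Real.log c₂| + 1) ≤ Real.log (R/r) * (-α) := by
          have h2 := mul_le_mul_of_nonneg_right hrlog hαneg.le
          rwa [div_mul_cancel₀ _ (ne_of_gt hαneg)] at h2
        have hflip : Real.log (R/r) * α ≤ -(|Real.log c₂| + 1) := by
          have h2 : Real.log (R/r) * α = -(Real.log (R/r) * (-α)) := by ring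
          rw [h2]
          linarith
        have hlt : Real.exp (Real.log (R/r) * α) < Real.exp (-Real.log c₂) := by
          apply Real.exp_lt_exp.2
          linarith [le_abs_self (Real.log c₂)]
        have hexp : Real.exp (-Real.log c₂) = c₂⁻¹ := by
          rw [Real.exp_neg, Real.exp_log hc₂]
        rw [hrw]
        calc c₂ * Real.exp (Real.log (R/r) * α) < c₂ * c₂⁻¹ := by
              apply mul_lt_mul_of_pos_left _ hc₂
              rw [← hexp]
              exact hlt
          _ = 1 := mul_inv_cancel₀ (ne_of_gt hc₂)
      have hlt1 : coverNumber r (closedBall (0:ℝ) R ∩ E) < 1 :=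
        lt_of_le_of_lt happ (ENNReal.ofReal_lt_one.2 hval)
      exact absurd (lt_of_le_of_lt hone hlt1) (lt_irrefl _)
    have hne : (1:ℝ) ∈ {α : ℝ | ∃ c₁ > (0:ℝ), ∃ c₂ > (0:ℝ), ∀ r R : ℝ,
        0 < r → r ≤ R ^ (1 + Φ R) → R ^ (1 + Φ R) ≤ R → R < c₁ →
          ∀ z ∈ decreasingSet a,
          coverNumber r (closedBall z R ∩ decreasingSet a)
            ≤ ENNReal.ofReal (c₂ * (R / r) ^ α)} :=
      one_mem_upperSet Φ (decreasingSet a)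
    refine csInf_le_csInf hbdd ⟨1, hne⟩ ?_
    rintro α ⟨c₁, hc₁, c₂, hc₂, h⟩
    have h01 : 0 < min c₁ 1 := lt_min hc₁ one_pos
    have h4pos : (0:ℝ) < (4:ℝ) ^ α := Real.rpow_pos_of_pos (by norm_num) α
    refine ⟨min c₁ 1 / 4, by linarith, 18 * c₂ * (4:ℝ) ^ α, by positivity, ?_⟩
    intro r R hr hrρ hρR hRc z hz
    have hrR : r ≤ R := le_trans hrρ hρR
    have hR0 : 0 < R := lt_of_lt_of_le hr hrR
    have h4Rc : 4*R < c₁ := by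
      have h3 := min_le_left c₁ 1
      linarith
    have h4R1 : 4*R < 1 := by
      have h3 := min_le_right c₁ 1
      linarith
    have hR1 : R < 1 := by linarith
    have hmono := hΦmono R ⟨hR0, hR1⟩ (4*R) ⟨by linarith, h4R1⟩ (by linarith)
    have hr4 : r ≤ (4*R) ^ (1 + Φ (4*R)) := le_trans hrρ hmono
    have h4ρ : (4*R) ^ (1 + Φ (4*R)) ≤ 4*R := (rpow_facts Φ hΦ (by linarith) h4R1).2
    have hgto0 : Tendsto g atTop (nhds 0) := hgsum.tendsto_atTop_zero
    have hexK : ∃ k, g k < r := (hgto0.eventually (eventually_lt_nhds hr)).exists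
    set K := Nat.find hexK with hKdef
    have hsmallK : ∀ j, K ≤ j → g j < r :=
      fun j hj => lt_of_le_of_lt (hganti _ _ hj) (Nat.find_spec hexK)
    have hbigK : ∀ j, j < K → r ≤ g j := fun j hj => not_lt.1 (Nat.find_min hexK hj)
    obtain ⟨N, hN1, hN2⟩ := cover_bound_complementary g c hg0 hgsum hgtot hc hdisj
      E hEeq r R z hr hrR K hbigK hsmallK
    set nn := ((Finset.range K).filter
      (fun j => Ioo (c j) (c j + g j) ⊆ Icc (z - 2*R) (z + 2*R))).card with hnn
    have hnnK : nn ≤ K := by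
      rw [hnn]
      have h2 := Finset.card_filter_le (Finset.range K)
        (fun j => Ioo (c j) (c j + g j) ⊆ Icc (z - 2*R) (z + 2*R))
      simpa using h2
    set T := min (tTail g K) (4*R) with hT
    set q := ⌊T / (4*r)⌋₊ with hqdef
    have hT0 : 0 ≤ T := le_min (tTail_nonneg hg0 K) (by linarith)
    have h4r0 : (0:ℝ) < 4*r := by linarith
    have hq4 : (q:ℝ) * (4*r) ≤ T := by
      have hfl : (q:ℝ) ≤ T/(4*r) := Nat.floor_le (div_nonneg hT0 h4r0.le)
      calc (q:ℝ) * (4*r) ≤ (T/(4*r)) * (4*r) := by nlinarith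
        _ = T := by field_simp
    have hsumnn : ∑ j ∈ Finset.Ico (K - nn) K, g j ≤ 4*R := by
      have h1 := sum_Ico_le_sum_subset g (fun j => (hg0 j).le) hganti nn K
        ((Finset.range K).filter
          (fun j => Ioo (c j) (c j + g j) ⊆ Icc (z - 2*R) (z + 2*R)))
        (Finset.filter_subset _ _) hnn.symm
      have h2 : ∑ j ∈ (Finset.range K).filter
          (fun j => Ioo (c j) (c j + g j) ⊆ Icc (z - 2*R) (z + 2*R)), g j
          ≤ (z + 2*R) - (z - 2*R) := by
        refine sum_gaps_le g c hg0 hdisj _ (by linarith) ?_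
        intro j hj
        exact (Finset.mem_filter.1 hj).2
      have h3 : (z + 2*R) - (z - 2*R) = 4*R := by ring
      linarith
    have hlow := lower_bound_decreasing g hg0 hgsum (decreasingSet a) hD r R hr
      K nn q hbigK hsmallK hnnK hsumnn hq4
    have hDapp := h r (4*R) hr hr4 h4ρ h4Rc (tTail g K) (hD K)
    have hTlt : T / r < 4*(q:ℝ) + 4 := by
      have h1 : T/(4*r) < (q:ℝ) + 1 := Nat.lt_floor_add_one _
      have h2 : T / r = 4 * (T / (4*r)) := by
        field_simp
      rw [h2]
      linarith
    have hNle : N ≤ 18 * (q + (nn/3 + 1)) := by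
      have h1 : (N:ℝ) < 2*(nn:ℝ) + 6 + (4*(q:ℝ) + 4) := by linarith
      have h2 : (N:ℝ) < ((2*nn + 4*q + 10 : ℕ) : ℝ) := by push_cast; linarith
      have h3 : N < 2*nn + 4*q + 10 := by exact_mod_cast h2
      omega
    calc coverNumber r (closedBall z R ∩ E) ≤ (N:ℝ≥0∞) := hN1
      _ ≤ ((18 * (q + (nn/3 + 1)) : ℕ) : ℝ≥0∞) := by exact_mod_cast hNle
      _ = 18 * ((q + (nn/3 + 1) : ℕ) : ℝ≥0∞) := by push_cast; ring
      _ ≤ 18 * coverNumber r (closedBall (tTail g K) (4*R) ∩ decreasingSet a) :=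
          mul_le_mul_right hlow _
      _ ≤ 18 * ENNReal.ofReal (c₂ * (4*R/r) ^ α) := mul_le_mul_right hDapp _
      _ = ENNReal.ofReal (18 * (c₂ * (4*R/r) ^ α)) := by
          rw [ENNReal.ofReal_mul (by norm_num : (0:ℝ) ≤ 18), ENNReal.ofReal_ofNat]
      _ = ENNReal.ofReal (18 * c₂ * (4:ℝ)^α * (R/r) ^ α) := by
          congr 1
          have h4r : (4*R/r) ^ α = (4:ℝ)^α * (R/r)^α := by
            rw [mul_div_assoc, Real.mul_rpow (by norm_num) (div_nonneg hR0.le hr.le)]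
          rw [h4r]
          ring
  · -- lower phi dim comparison
    rw [hlowerD]
    unfold lowerPhiDim
    by_cases hb : BddAbove {α : ℝ | ∃ c₁ > (0:ℝ), ∃ c₂ > (0:ℝ), ∀ r R : ℝ,
        0 < r → r ≤ R ^ (1 + Φ R) → R ^ (1 + Φ R) ≤ R → R < c₁ → ∀ z ∈ E,
          ENNReal.ofReal (c₂ * (R / r) ^ α) ≤ coverNumber r (closedBall z R ∩ E)}
    · exact le_csSup hb (zero_mem_lowerSet Φ E)
    · rw [Real.sSup_of_not_bddAbove hb]


end
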